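/- arXiv:2003.03889 — 9 statements merged into one kernel-verified Lean document; each statement's English description precedes it below -/
import Mathlib

section
/- Let D, M ∈ ℝ^{s×s} and t_L ∈ ℝ^s, where M is symmetric positive definite, M·D + (M·D)ᵀ = t_R·t_Rᵀ − t_L·t_Lᵀ for some t_R ∈ ℝ^s, D·𝟙 = 0 and t_Lᵀ·𝟙 = 1. Then the matrix D + M⁻¹·t_L·t_Lᵀ is invertible if and only if the kernel of D (as a linear map ℝ^s → ℝ^s) is exactly the span of 𝟙. -/
/-!
If `A x = 0`, then `(M D) x = -(t_L ⬝ x) t_L`, so `xᵀ M D x = -(t_L ⬝ x)²`; by the SBP property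
`2 xᵀ M D x = (t_R ⬝ x)² - (t_L ⬝ x)²`. Together these force `(t_R ⬝ x)² + (t_L ⬝ x)² = 0`, hence
`t_L ⬝ x = 0` and `D x = 0`. So `ker A = ker D ∩ ker t_Lᵀ`, and because `D 𝟙 = 0` and `t_L ⬝ 𝟙 = 1`
this intersection is trivial exactly when `ker D = span 𝟙`.
-/

open Matrix

theorem LinearMap.ker_eq_span_singleton_iff_disjoint {R V W : Type*} [Ring R]
    [AddCommGroup V] [Module R V] [AddCommGroup W] [Module R W]
    (f : V →ₗ[R] W) (φ : V →ₗ[R] R) {v : V} (hfv : f v = 0) (hφv : φ v = 1) :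
    ker f = R ∙ v ↔ Disjoint (ker f) (ker φ) := by
  rw [Submodule.disjoint_def]
  constructor
  · intro hker x hfx hφx
    obtain ⟨a, rfl⟩ := Submodule.mem_span_singleton.mp (hker ▸ hfx)
    simp_all
  · intro hdisj
    refine le_antisymm (fun x hfx => ?_) ((Submodule.span_singleton_le_iff_mem _ _).mpr hfv)
    have hx : x - φ x • v = 0 := hdisj _ (by simp [LinearMap.mem_ker.mp hfx, hfv]) (by simp [hφv])
    exact Submodule.mem_span_singleton.mpr ⟨φ x, (sub_eq_zero.mp hx).symm⟩

namespace Matrix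

variable {n K : Type*} [Fintype n] [Field K] [LinearOrder K] [IsStrictOrderedRing K]

theorem add_vecMulVec_mulVec_eq_zero_iff {B : Matrix n n K} {tL tR : n → K}
    (hB : B + Bᵀ = vecMulVec tR tR - vecMulVec tL tL) {x : n → K} :
    (B + vecMulVec tL tL) *ᵥ x = 0 ↔ B *ᵥ x = 0 ∧ tL ⬝ᵥ x = 0 := by
  simp only [add_mulVec, vecMulVec_mulVec, op_smul_eq_smul]
  refine ⟨fun hx => ?_, fun ⟨hBx, hc⟩ => by simp [hBx, hc]⟩
  set c := tL ⬝ᵥ x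
  have hBx : B *ᵥ x = -(c • tL) := eq_neg_of_add_eq_zero_left hx
  have hquad : 2 * (x ⬝ᵥ B *ᵥ x) = (tR ⬝ᵥ x) ^ 2 - c ^ 2 := by
    calc 2 * (x ⬝ᵥ B *ᵥ x) = x ⬝ᵥ (B + Bᵀ) *ᵥ x := by
          rw [add_mulVec, dotProduct_add, dotProduct_transpose_mulVec]; ring
      _ = (tR ⬝ᵥ x) ^ 2 - c ^ 2 := by
          rw [hB, dotProduct_mulVec, vecMul_sub, vecMul_vecMulVec, vecMul_vecMulVec,
            sub_dotProduct, smul_dotProduct, smul_dotProduct, smul_eq_mul, smul_eq_mul,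
            dotProduct_comm x tR, dotProduct_comm x tL]
          ring
  have hc : c = 0 := by
    rw [hBx, dotProduct_neg, dotProduct_smul, smul_eq_mul, dotProduct_comm] at hquad
    nlinarith [sq_nonneg (tR ⬝ᵥ x), sq_nonneg c]
  exact ⟨by simp [hBx, hc], hc⟩

variable [DecidableEq n]

theorem isUnit_add_inv_mul_vecMulVec_iff {D M : Matrix n n K} {tL tR : n → K}
    (hM : IsUnit M) (hSBP : M * D + (M * D)ᵀ = vecMulVec tR tR - vecMulVec tL tL) :
    IsUnit (D + M⁻¹ * vecMulVec tL tL) ↔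
      Disjoint (LinearMap.ker (toLin' D)) (LinearMap.ker (dotProductEquiv K n tL)) := by
  have hMinj := mulVec_injective_iff_isUnit.mpr hM
  have hMA : M * (D + M⁻¹ * vecMulVec tL tL) = M * D + vecMulVec tL tL := by
    rw [mul_add, mul_nonsing_inv_cancel_left _ _ ((isUnit_iff_isUnit_det M).mp hM)]
  have hA (x : n → K) :
      (D + M⁻¹ * vecMulVec tL tL) *ᵥ x = 0 ↔ D *ᵥ x = 0 ∧ tL ⬝ᵥ x = 0 := by
    rw [← hMinj.eq_iff' (mulVec_zero M), mulVec_mulVec, hMA,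
      add_vecMulVec_mulVec_eq_zero_iff hSBP, ← mulVec_mulVec, hMinj.eq_iff' (mulVec_zero M)]
  rw [← mulVec_injective_iff_isUnit, ← coe_mulVecLin, injective_iff_map_eq_zero,
    Submodule.disjoint_def]
  simp only [mulVecLin_apply, hA, and_imp, LinearMap.mem_ker, toLin'_apply,
    dotProductEquiv_apply_apply]

end Matrix

theorem sbp_sat_invertible_iff_nullspace_consistent_general
    {s : ℕ}
    (D M : Matrix (Fin s) (Fin s) ℝ) (tL tR : Fin s → ℝ)
    (hM : M.PosDef)
    (hSBP : M * D + (M * D)ᵀ = vecMulVec tR tR - vecMulVec tL tL)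
    (hD1 : D *ᵥ (1 : Fin s → ℝ) = 0)
    (htL1 : tL ⬝ᵥ (1 : Fin s → ℝ) = 1) :
    IsUnit (D + M⁻¹ * vecMulVec tL tL) ↔
      LinearMap.ker (Matrix.toLin' D) = Submodule.span ℝ {(1 : Fin s → ℝ)} := by
  rw [isUnit_add_inv_mul_vecMulVec_iff hM.isUnit hSBP,
    LinearMap.ker_eq_span_singleton_iff_disjoint _ (dotProductEquiv ℝ (Fin s) tL) hD1 htL1]

/-- For a first-derivative SBP operator (M symmetric positive definite,
SBP property, consistency `D *ᵥ 1 = 0`, `t_L ⬝ᵥ 1 = 1`), the matrix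
`D + M⁻¹ * t_L t_Lᵀ` is invertible iff `D` is nullspace consistent, i.e.
`ker D = span {𝟙}`. -/
theorem sbp_sat_invertible_iff_nullspace_consistent
    {s : ℕ} (hs : 1 ≤ s)
    (D M : Matrix (Fin s) (Fin s) ℝ) (tL tR : Fin s → ℝ)
    (hM : M.PosDef)
    (hSBP : M * D + (M * D)ᵀ = vecMulVec tR tR - vecMulVec tL tL)
    (hD1 : D *ᵥ (1 : Fin s → ℝ) = 0)
    (htL1 : tL ⬝ᵥ (1 : Fin s → ℝ) = 1) :
    IsUnit (D + M⁻¹ * vecMulVec tL tL) ↔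
      LinearMap.ker (Matrix.toLin' D) = Submodule.span ℝ {(1 : Fin s → ℝ)} :=
  sbp_sat_invertible_iff_nullspace_consistent_general D M tL tR hM hSBP hD1 htL1
end

section
/- Let D, M ∈ ℝ^{s×s} and t_L ∈ ℝ^s with M invertible, D·𝟙 = 0, t_Lᵀ·𝟙 = 1, and suppose D + M⁻¹·t_L·t_Lᵀ is invertible. Then for every f ∈ ℝ^s and u₀ ∈ ℝ, a vector u ∈ ℝ^s satisfies the SBP-SAT equation D·u = f + M⁻¹·t_L·(u₀ − t_Lᵀ·u) if and only if u = u₀·𝟙 + (D + M⁻¹·t_L·t_Lᵀ)⁻¹·f. -/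
open Matrix

/-
Put `A = D + M⁻¹ t_L t_Lᵀ`. Adding `(t_Lᵀ u) M⁻¹ t_L` to both sides turns the scheme into
`A u = f + u₀ M⁻¹ t_L`, and `D 𝟙 = 0`, `t_Lᵀ 𝟙 = 1` give `A 𝟙 = M⁻¹ t_L`, so the scheme reads
`A (u - u₀ 𝟙) = f`; invert `A`.
-/

namespace Matrix

variable {n R : Type*} [Fintype n] [CommRing R]

theorem add_mul_vecMulVec_mulVec (D N : Matrix n n R) (a b v : n → R) :
    (D + N * vecMulVec a b) *ᵥ v = D *ᵥ v + (b ⬝ᵥ v) • (N *ᵥ a) := by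
  rw [add_mulVec, mul_vecMulVec, vecMulVec_mulVec, op_smul_eq_smul]

theorem mulVec_eq_iff_eq_inv_mulVec [DecidableEq n] {A : Matrix n n R} (hA : IsUnit A)
    {x y : n → R} : A *ᵥ x = y ↔ x = A⁻¹ *ᵥ y := by
  have hdet : IsUnit A.det := (isUnit_iff_isUnit_det A).mp hA
  constructor
  · rintro rfl
    rw [mulVec_mulVec, nonsing_inv_mul A hdet, one_mulVec]
  · rintro rfl
    rw [mulVec_mulVec, mul_nonsing_inv A hdet, one_mulVec]

end Matrix

theorem sbp_sat_solution_characterization_general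
    {s : ℕ}
    (D M : Matrix (Fin s) (Fin s) ℝ) (tL : Fin s → ℝ)
    (hD1 : D *ᵥ (1 : Fin s → ℝ) = 0)
    (htL1 : tL ⬝ᵥ (1 : Fin s → ℝ) = 1)
    (hInv : IsUnit (D + M⁻¹ * vecMulVec tL tL))
    (f : Fin s → ℝ) (u₀ : ℝ) (u : Fin s → ℝ) :
    D *ᵥ u = f + (u₀ - tL ⬝ᵥ u) • (M⁻¹ *ᵥ tL) ↔
      u = u₀ • (1 : Fin s → ℝ) + (D + M⁻¹ * vecMulVec tL tL)⁻¹ *ᵥ f := by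
  set A := D + M⁻¹ * vecMulVec tL tL
  have hA1 : A *ᵥ 1 = M⁻¹ *ᵥ tL := by
    rw [add_mul_vecMulVec_mulVec, hD1, htL1, zero_add, one_smul]
  calc D *ᵥ u = f + (u₀ - tL ⬝ᵥ u) • (M⁻¹ *ᵥ tL)
      ↔ A *ᵥ u = f + u₀ • (M⁻¹ *ᵥ tL) := by
        rw [add_mul_vecMulVec_mulVec, sub_smul, add_sub_assoc', eq_sub_iff_add_eq]
    _ ↔ A *ᵥ (u - u₀ • 1) = f := by
        rw [mulVec_sub, mulVec_smul, hA1, sub_eq_iff_eq_add]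
    _ ↔ u - u₀ • 1 = A⁻¹ *ᵥ f := mulVec_eq_iff_eq_inv_mulVec hInv
    _ ↔ u = u₀ • 1 + A⁻¹ *ᵥ f := by rw [sub_eq_iff_eq_add']

/-- With `M` invertible, `D *ᵥ 1 = 0`, `t_L ⬝ᵥ 1 = 1`, and
`D + M⁻¹ t_L t_Lᵀ` invertible, a vector `u` solves the SBP-SAT scheme
`D u = f + M⁻¹ t_L (u₀ − t_Lᵀ u)` iff `u = u₀ 𝟙 + (D + M⁻¹ t_L t_Lᵀ)⁻¹ f`. -/
theorem sbp_sat_solution_characterization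
    {s : ℕ} (hs : 1 ≤ s)
    (D M : Matrix (Fin s) (Fin s) ℝ) (tL : Fin s → ℝ)
    (hM : IsUnit M)
    (hD1 : D *ᵥ (1 : Fin s → ℝ) = 0)
    (htL1 : tL ⬝ᵥ (1 : Fin s → ℝ) = 1)
    (hInv : IsUnit (D + M⁻¹ * vecMulVec tL tL))
    (f : Fin s → ℝ) (u₀ : ℝ) (u : Fin s → ℝ) :
    D *ᵥ u = f + (u₀ - tL ⬝ᵥ u) • (M⁻¹ *ᵥ tL) ↔
      u = u₀ • (1 : Fin s → ℝ) + (D + M⁻¹ * vecMulVec tL tL)⁻¹ *ᵥ f :=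
  sbp_sat_solution_characterization_general D M tL hD1 htL1 hInv f u₀ u
end

section
/- Let D, M ∈ ℝ^{s×s} and t_L, t_R ∈ ℝ^s, where M is symmetric positive definite and invertible, M·D + (M·D)ᵀ = t_R·t_Rᵀ − t_L·t_Lᵀ, D·𝟙 = 0, t_Lᵀ·𝟙 = 1 and t_Rᵀ·𝟙 = 1. Then the row vector 𝟙ᵀ·M·(D + M⁻¹·t_L·t_Lᵀ) equals t_Rᵀ; consequently, if D + M⁻¹·t_L·t_Lᵀ is invertible, then t_Rᵀ·(D + M⁻¹·t_L·t_Lᵀ)⁻¹ = 𝟙ᵀ·M, so the SBP-SAT scheme is a Runge–Kutta method with weight vector b = M·𝟙 (up to the time scaling). -/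
open Matrix

/-!
Multiplying the SBP property from the left by `𝟙ᵀ` kills `(M D)ᵀ`, because `(M D) 𝟙 = 0`,
and leaves `𝟙ᵀ M D = t_Rᵀ - t_Lᵀ`; the SAT term `M⁻¹ t_L t_Lᵀ` then adds back `t_Lᵀ`.
Inverting `D + M⁻¹ t_L t_Lᵀ` turns `(𝟙ᵀ M) (D + M⁻¹ t_L t_Lᵀ) = t_Rᵀ` into the weight identity.
-/

section

variable {n R : Type*} [Fintype n] [CommRing R]

theorem one_vecMul_mul_eq_sub_of_sbp {M D : Matrix n n R} {tL tR : n → R}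
    (hSBP : M * D + (M * D)ᵀ = vecMulVec tR tR - vecMulVec tL tL) (hD1 : D *ᵥ 1 = 0)
    (htL1 : tL ⬝ᵥ 1 = 1) (htR1 : tR ⬝ᵥ 1 = 1) :
    1 ᵥ* (M * D) = tR - tL := by
  have htranspose : (1 : n → R) ᵥ* (M * D)ᵀ = 0 := by
    rw [vecMul_transpose, ← mulVec_mulVec, hD1, mulVec_zero]
  have h := congrArg (vecMul 1) hSBP
  rwa [vecMul_add, htranspose, add_zero, vecMul_sub, vecMul_vecMulVec, vecMul_vecMulVec,
    dotProduct_comm 1 tR, dotProduct_comm 1 tL, htR1, htL1, one_smul, one_smul] at h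

theorem one_vecMul_mul_add_sat_eq_of_sbp [DecidableEq n] {M D : Matrix n n R} {tL tR : n → R}
    (hM : IsUnit M) (hSBP : M * D + (M * D)ᵀ = vecMulVec tR tR - vecMulVec tL tL)
    (hD1 : D *ᵥ 1 = 0) (htL1 : tL ⬝ᵥ 1 = 1) (htR1 : tR ⬝ᵥ 1 = 1) :
    1 ᵥ* (M * (D + M⁻¹ * vecMulVec tL tL)) = tR := by
  rw [Matrix.mul_add, mul_nonsing_inv_cancel_left _ _ ((isUnit_iff_isUnit_det M).mp hM),
    vecMul_add, one_vecMul_mul_eq_sub_of_sbp hSBP hD1 htL1 htR1, vecMul_vecMulVec,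
    dotProduct_comm, htL1, one_smul, sub_add_cancel]

theorem vecMul_nonsing_inv_eq_of_vecMul_eq [DecidableEq n] {A : Matrix n n R} (hA : IsUnit A)
    {v w : n → R} (h : v ᵥ* A = w) :
    w ᵥ* A⁻¹ = v := by
  rw [← h, vecMul_vecMul, mul_nonsing_inv _ ((isUnit_iff_isUnit_det A).mp hA), vecMul_one]

end

theorem sbp_sat_runge_kutta_weights_general
    {s : ℕ}
    (D M : Matrix (Fin s) (Fin s) ℝ) (tL tR : Fin s → ℝ)
    (hMinv : IsUnit M)
    (hSBP : M * D + (M * D)ᵀ = vecMulVec tR tR - vecMulVec tL tL)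
    (hD1 : D *ᵥ (1 : Fin s → ℝ) = 0)
    (htL1 : tL ⬝ᵥ (1 : Fin s → ℝ) = 1)
    (htR1 : tR ⬝ᵥ (1 : Fin s → ℝ) = 1) :
    (1 : Fin s → ℝ) ᵥ* (M * (D + M⁻¹ * vecMulVec tL tL)) = tR ∧
      (IsUnit (D + M⁻¹ * vecMulVec tL tL) →
        tR ᵥ* (D + M⁻¹ * vecMulVec tL tL)⁻¹ = (1 : Fin s → ℝ) ᵥ* M) := by
  have hweights := one_vecMul_mul_add_sat_eq_of_sbp hMinv hSBP hD1 htL1 htR1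
  refine ⟨hweights, fun hA => vecMul_nonsing_inv_eq_of_vecMul_eq hA ?_⟩
  rwa [vecMul_vecMul]

/-- Under the SBP property and the consistency assumptions,
`𝟙ᵀ M (D + M⁻¹ t_L t_Lᵀ) = t_Rᵀ`; consequently, if `D + M⁻¹ t_L t_Lᵀ` is
invertible, `t_Rᵀ (D + M⁻¹ t_L t_Lᵀ)⁻¹ = 𝟙ᵀ M`, i.e. the SBP-SAT scheme is a
Runge-Kutta method with weights `b = M 𝟙` (up to time scaling). -/
theorem sbp_sat_runge_kutta_weights
    {s : ℕ} (hs : 1 ≤ s)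
    (D M : Matrix (Fin s) (Fin s) ℝ) (tL tR : Fin s → ℝ)
    (hM : M.PosDef) (hMinv : IsUnit M)
    (hSBP : M * D + (M * D)ᵀ = vecMulVec tR tR - vecMulVec tL tL)
    (hD1 : D *ᵥ (1 : Fin s → ℝ) = 0)
    (htL1 : tL ⬝ᵥ (1 : Fin s → ℝ) = 1)
    (htR1 : tR ⬝ᵥ (1 : Fin s → ℝ) = 1) :
    (1 : Fin s → ℝ) ᵥ* (M * (D + M⁻¹ * vecMulVec tL tL)) = tR ∧
      (IsUnit (D + M⁻¹ * vecMulVec tL tL) →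
        tR ᵥ* (D + M⁻¹ * vecMulVec tL tL)⁻¹ = (1 : Fin s → ℝ) ᵥ* M) :=
  sbp_sat_runge_kutta_weights_general D M tL tR hMinv hSBP hD1 htL1 htR1
end

section
/- Let D, M ∈ ℝ^{s×s} and t_L, t_R ∈ ℝ^s, where M is symmetric positive definite and M·D + (M·D)ᵀ = t_R·t_Rᵀ − t_L·t_Lᵀ. Let λ ∈ ℂ with Re λ ≤ 0, u₀ ∈ ℂ, and let u ∈ ℂ^s satisfy the (entrywise complexified) SBP-SAT equation M·(D·u) = λ·(M·u) + (u₀ − t_Lᵀ·u)·t_L. Then |t_Rᵀ·u| ≤ |u₀|, i.e. the SBP-SAT scheme is A stable. -/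
/-!
Testing the SAT equation against `uᴴ` gives `uᴴ(MD)u = λ·uᴴMu + (u₀ - t_Lᵀu)·conj (t_Lᵀu)`,
while the SBP property gives `2 Re uᴴ(MD)u = |t_Rᵀu|² - |t_Lᵀu|²`. As `uᴴMu ≥ 0` and `Re λ ≤ 0`,
this yields `|t_Rᵀu|² ≤ |u₀|² - |u₀ - t_Lᵀu|²`. The argument works verbatim for complex SBP data
(with `ᵀ` replaced by `ᴴ` and `t ⬝ᵥ u` by `star t ⬝ᵥ u`), so the real operator is complexified first.
-/

open Matrix ComplexConjugate
open scoped ComplexOrder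

namespace Matrix

variable {l m n : Type*} [Fintype n]

theorem star_dotProduct_conjTranspose_mulVec {α : Type*} [NonUnitalSemiring α] [StarRing α]
    (B : Matrix n n α) (u : n → α) :
    star u ⬝ᵥ (Bᴴ *ᵥ u) = star (star u ⬝ᵥ (B *ᵥ u)) := by
  rw [mulVec_conjTranspose, star_dotProduct_star, dotProduct_mulVec]

theorem star_dotProduct_vecMulVec_star_mulVec {α : Type*} [CommSemiring α] [StarRing α]
    (t u : n → α) :
    star u ⬝ᵥ (vecMulVec t (star t) *ᵥ u) = star (star t ⬝ᵥ u) * (star t ⬝ᵥ u) := by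
  rw [vecMulVec_mulVec, op_smul_eq_smul, dotProduct_smul, smul_eq_mul, mul_comm,
    ← star_dotProduct]

omit [Fintype n] in
theorem map_ofReal_mul [Fintype m] (A : Matrix l m ℝ) (B : Matrix m n ℝ) :
    (A * B).map Complex.ofReal = A.map Complex.ofReal * B.map Complex.ofReal :=
  Matrix.map_mul (f := Complex.ofRealHom)

omit [Fintype n] in
theorem conjTranspose_map_ofReal (A : Matrix m n ℝ) :
    (A.map Complex.ofReal)ᴴ = Aᵀ.map Complex.ofReal :=
  (conjTranspose_map _ fun _ => (Complex.conj_ofReal _).symm).symm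

omit [Fintype n] in
theorem vecMulVec_map_ofReal (a : m → ℝ) (b : n → ℝ) :
    (vecMulVec a b).map Complex.ofReal =
      vecMulVec (fun i => (a i : ℂ)) (fun j => (b j : ℂ)) := by
  ext i j
  simp [vecMulVec_apply]

theorem PosSemidef.map_ofReal {M : Matrix n n ℝ} (hM : M.PosSemidef) :
    (M.map Complex.ofReal).PosSemidef := by
  classical
  open scoped MatrixOrder in
  obtain ⟨B, rfl⟩ := CStarAlgebra.nonneg_iff_eq_star_mul_self.mp hM.nonneg
  rw [star_eq_conjTranspose, conjTranspose_eq_transpose_of_trivial, map_ofReal_mul,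
    ← conjTranspose_map_ofReal]
  exact posSemidef_conjTranspose_mul_self _

end Matrix

section SBP

variable {n : Type*} [Fintype n]

theorem sbp_energy_identity {D M : Matrix n n ℂ} {tL tR : n → ℂ}
    (hSBP : M * D + (M * D)ᴴ = vecMulVec tR (star tR) - vecMulVec tL (star tL)) (u : n → ℂ) :
    2 * (star u ⬝ᵥ ((M * D) *ᵥ u)).re = ‖star tR ⬝ᵥ u‖ ^ 2 - ‖star tL ⬝ᵥ u‖ ^ 2 := by
  have h := congrArg (fun B => star u ⬝ᵥ (B *ᵥ u)) hSBP
  simp only [add_mulVec, sub_mulVec, dotProduct_add, dotProduct_sub,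
    star_dotProduct_conjTranspose_mulVec, star_dotProduct_vecMulVec_star_mulVec,
    Complex.star_def, Complex.add_conj, Complex.conj_mul'] at h
  exact_mod_cast h

theorem norm_le_of_energy_balance {lam q u₀ l r : ℂ} (hlam : lam.re ≤ 0) (hq : 0 ≤ q)
    (h : ‖r‖ ^ 2 - ‖l‖ ^ 2 = 2 * (lam * q + (u₀ - l) * conj l).re) : ‖r‖ ≤ ‖u₀‖ := by
  obtain ⟨hq_re, hq_im⟩ := Complex.nonneg_iff.mp hq
  have hu₀ : ‖u₀‖ ^ 2 = ‖u₀ - l‖ ^ 2 + ‖l‖ ^ 2 + 2 * ((u₀ - l) * conj l).re := by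
    simpa only [Complex.sq_norm, sub_add_cancel] using Complex.normSq_add (u₀ - l) l
  have hdiss : (lam * q).re ≤ 0 := by
    rw [Complex.mul_re, ← hq_im, mul_zero, sub_zero]
    exact mul_nonpos_of_nonpos_of_nonneg hlam hq_re
  rw [Complex.add_re] at h
  refine (pow_le_pow_iff_left₀ (norm_nonneg _) (norm_nonneg _) two_ne_zero).mp ?_
  nlinarith [sq_nonneg ‖u₀ - l‖]

theorem norm_star_dotProduct_le_of_sbp_sat {D M : Matrix n n ℂ} {tL tR : n → ℂ}
    (hM : M.PosSemidef)
    (hSBP : M * D + (M * D)ᴴ = vecMulVec tR (star tR) - vecMulVec tL (star tL))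
    {lam : ℂ} (hlam : lam.re ≤ 0) {u₀ : ℂ} {u : n → ℂ}
    (hu : M *ᵥ (D *ᵥ u) = lam • (M *ᵥ u) + (u₀ - star tL ⬝ᵥ u) • tL) :
    ‖star tR ⬝ᵥ u‖ ≤ ‖u₀‖ := by
  have hsat : star u ⬝ᵥ ((M * D) *ᵥ u) =
      lam * (star u ⬝ᵥ (M *ᵥ u)) + (u₀ - star tL ⬝ᵥ u) * conj (star tL ⬝ᵥ u) := by
    rw [← mulVec_mulVec, hu, dotProduct_add, dotProduct_smul, dotProduct_smul,
      star_dotProduct u tL, smul_eq_mul, smul_eq_mul, Complex.star_def]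
  refine norm_le_of_energy_balance (l := star tL ⬝ᵥ u) hlam (hM.dotProduct_mulVec_nonneg u) ?_
  rw [← sbp_energy_identity hSBP, hsat]

end SBP

theorem star_ofReal_comp {n : Type*} (t : n → ℝ) :
    star (fun i => (t i : ℂ)) = fun i => (t i : ℂ) :=
  funext fun _ => Complex.conj_ofReal _

theorem sbp_map_ofReal {n : Type*} [Fintype n] {D M : Matrix n n ℝ} {tL tR : n → ℝ}
    (hSBP : M * D + (M * D)ᵀ = vecMulVec tR tR - vecMulVec tL tL) :
    M.map Complex.ofReal * D.map Complex.ofReal + (M.map Complex.ofReal * D.map Complex.ofReal)ᴴ =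
      vecMulVec (fun i => (tR i : ℂ)) (star fun i => (tR i : ℂ)) -
        vecMulVec (fun i => (tL i : ℂ)) (star fun i => (tL i : ℂ)) := by
  rw [star_ofReal_comp, star_ofReal_comp, ← map_ofReal_mul, conjTranspose_map_ofReal,
    ← vecMulVec_map_ofReal, ← vecMulVec_map_ofReal, ← Matrix.map_add _ Complex.ofReal_add,
    ← Matrix.map_sub _ Complex.ofReal_sub, hSBP]

theorem sbp_sat_A_stable_general
    {s : ℕ}
    (D M : Matrix (Fin s) (Fin s) ℝ) (tL tR : Fin s → ℝ)
    (hM : M.PosDef)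
    (hSBP : M * D + (M * D)ᵀ = vecMulVec tR tR - vecMulVec tL tL)
    (lam : ℂ) (hlam : lam.re ≤ 0) (u₀ : ℂ) (u : Fin s → ℂ)
    (hu : (M.map Complex.ofReal) *ᵥ ((D.map Complex.ofReal) *ᵥ u) =
        lam • ((M.map Complex.ofReal) *ᵥ u) +
          (u₀ - (fun i => (tL i : ℂ)) ⬝ᵥ u) • (fun i => (tL i : ℂ))) :
    ‖(fun i => (tR i : ℂ)) ⬝ᵥ u‖ ≤ ‖u₀‖ := by
  have h := norm_star_dotProduct_le_of_sbp_sat hM.posSemidef.map_ofReal (sbp_map_ofReal hSBP)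
    hlam (u₀ := u₀) (u := u) (by rwa [star_ofReal_comp])
  rwa [star_ofReal_comp] at h

/-- A stability of the SBP-SAT scheme. If `Re λ ≤ 0` and `u ∈ ℂ^s`
solves the complexified SBP-SAT equation
`M (D u) = λ (M u) + (u₀ − t_Lᵀ u) t_L`, then `|t_Rᵀ u| ≤ |u₀|`. -/
theorem sbp_sat_A_stable
    {s : ℕ} (hs : 1 ≤ s)
    (D M : Matrix (Fin s) (Fin s) ℝ) (tL tR : Fin s → ℝ)
    (hM : M.PosDef)
    (hSBP : M * D + (M * D)ᵀ = vecMulVec tR tR - vecMulVec tL tL)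
    (lam : ℂ) (hlam : lam.re ≤ 0) (u₀ : ℂ) (u : Fin s → ℂ)
    (hu : (M.map Complex.ofReal) *ᵥ ((D.map Complex.ofReal) *ᵥ u) =
        lam • ((M.map Complex.ofReal) *ᵥ u) +
          (u₀ - (fun i => (tL i : ℂ)) ⬝ᵥ u) • (fun i => (tL i : ℂ))) :
    ‖(fun i => (tR i : ℂ)) ⬝ᵥ u‖ ≤ ‖u₀‖ :=
  sbp_sat_A_stable_general D M tL tR hM hSBP lam hlam u₀ u hu
end

section
/- Let D, M ∈ ℝ^{s×s} with s ≥ 1, M symmetric positive definite, suppose the kernel of D (as a linear map ℝ^s → ℝ^s) is exactly the span of 𝟙, and let o ∈ ℝ^s be nonzero with Dᵀ·M·o = 0. Define F = I − o·(M·o)ᵀ/(oᵀ·M·o). Then F·F = F, the matrix M·F is symmetric, and the range of F (as a linear map ℝ^s → ℝ^s) equals the range of D; that is, F is the M-orthogonal projection onto the image of D. -/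
/-!
With `w = M o` and `c = oᵀ M o > 0`, the filter is `F = 1 - c⁻¹ o wᵀ`, i.e. `F x = x - (wᵀx / c) o`.
Since `wᵀ o = c`, the rank-one part is idempotent, so `F` is a projection, and it is the identity
exactly on the hyperplane `wᵀ x = 0`, which is therefore its range; `M F = M - c⁻¹ w wᵀ` is
symmetric. The condition `Dᵀ w = 0` puts the range of `D` inside that hyperplane, and as `D` has a
one-dimensional kernel its range has dimension `s - 1` too, so the two coincide.
-/

open Matrix Module

namespace Matrix

variable {n K : Type*} [Fintype n] [DecidableEq n] [Field K]

theorem one_sub_smul_vecMulVec_mulVec (c : K) (u w x : n → K) :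
    (1 - c • vecMulVec u w) *ᵥ x = x - (c * (w ⬝ᵥ x)) • u := by
  rw [sub_mulVec, one_mulVec, smul_mulVec, vecMulVec_mulVec, op_smul_eq_smul, smul_smul]

theorem isIdempotentElem_one_sub_inv_smul_vecMulVec {u w : n → K} (h : u ⬝ᵥ w ≠ 0) :
    IsIdempotentElem (1 - (u ⬝ᵥ w)⁻¹ • vecMulVec u w) := by
  refine IsIdempotentElem.one_sub ?_
  rw [IsIdempotentElem, smul_mul_smul, vecMulVec_mul_vecMulVec, vecMulVec_smul, smul_smul,
    dotProduct_comm w u, inv_mul_cancel_right₀ h]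

theorem range_toLin'_one_sub_inv_smul_vecMulVec {u w : n → K} (h : u ⬝ᵥ w ≠ 0) :
    LinearMap.range (toLin' (1 - (u ⬝ᵥ w)⁻¹ • vecMulVec u w)) =
      LinearMap.ker (dotProductBilin K K w) := by
  apply le_antisymm
  · rintro _ ⟨x, rfl⟩
    simp only [LinearMap.mem_ker, dotProductBilin_apply_apply, toLin'_apply,
      one_sub_smul_vecMulVec_mulVec, dotProduct_sub, dotProduct_smul, smul_eq_mul,
      dotProduct_comm w u]
    field_simp
    ring
  · intro x hx
    refine ⟨x, ?_⟩
    rw [LinearMap.mem_ker, dotProductBilin_apply_apply] at hx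
    rw [toLin'_apply, one_sub_smul_vecMulVec_mulVec, hx, mul_zero, zero_smul, sub_zero]

theorem IsSymm.mul_one_sub_smul_vecMulVec {R : Type*} [CommRing R] {M : Matrix n n R}
    (hM : M.IsSymm) (c : R) (u : n → R) : (M * (1 - c • vecMulVec u (M *ᵥ u))).IsSymm := by
  rw [mul_sub, mul_one, mul_smul_comm, mul_vecMulVec]
  exact hM.sub (IsSymm.smul (transpose_vecMulVec _ _) c)

theorem range_toLin'_eq_ker_dotProductBilin {D : Matrix n n K} {w : n → K} (hw : w ≠ 0)
    (hDw : Dᵀ *ᵥ w = 0) (hker : finrank K (LinearMap.ker (toLin' D)) ≤ 1) :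
    LinearMap.range (toLin' D) = LinearMap.ker (dotProductBilin K K w) := by
  have hle : LinearMap.range (toLin' D) ≤ LinearMap.ker (dotProductBilin K K w) := by
    rintro _ ⟨x, rfl⟩
    rw [LinearMap.mem_ker, dotProductBilin_apply_apply, toLin'_apply, dotProduct_mulVec,
      ← mulVec_transpose, hDw, zero_dotProduct]
  refine Submodule.eq_of_le_of_finrank_le hle ?_
  have hφ : dotProductBilin K K w ≠ 0 := fun h0 => hw <| by
    ext i
    simpa using LinearMap.congr_fun h0 (Pi.single i 1)
  have := Module.Dual.finrank_ker_add_one_of_ne_zero hφ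
  have := LinearMap.finrank_range_add_finrank_ker (toLin' D)
  omega

end Matrix

theorem filter_is_M_orthogonal_projection_onto_range_D_general
    {s : ℕ}
    (D M : Matrix (Fin s) (Fin s) ℝ)
    (hM : M.PosDef)
    (hker : LinearMap.ker (Matrix.toLin' D) = Submodule.span ℝ {(1 : Fin s → ℝ)})
    (o : Fin s → ℝ) (ho : o ≠ 0) (hoD : Dᵀ *ᵥ (M *ᵥ o) = 0)
    (F : Matrix (Fin s) (Fin s) ℝ)
    (hF : F = 1 - (o ⬝ᵥ (M *ᵥ o))⁻¹ • vecMulVec o (M *ᵥ o)) :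
    F * F = F ∧ (M * F)ᵀ = M * F ∧
      LinearMap.range (Matrix.toLin' F) = LinearMap.range (Matrix.toLin' D) := by
  have hc : o ⬝ᵥ (M *ᵥ o) ≠ 0 := (hM.dotProduct_mulVec_pos ho).ne'
  have hMo : M *ᵥ o ≠ 0 := fun h => hc (by rw [h, dotProduct_zero])
  have hkerD : finrank ℝ (LinearMap.ker (toLin' D)) ≤ 1 := by
    rw [hker]
    simpa using finrank_span_le_card (R := ℝ) ({1} : Set (Fin s → ℝ))
  subst hF
  refine ⟨isIdempotentElem_one_sub_inv_smul_vecMulVec hc,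
    (isHermitian_iff_isSymm.mp hM.1).mul_one_sub_smul_vecMulVec _ o, ?_⟩
  rw [range_toLin'_one_sub_inv_smul_vecMulVec hc,
    range_toLin'_eq_ker_dotProductBilin hMo hoD hkerD]

/-- The filter `F = I − o (M o)ᵀ / (oᵀ M o)` associated with a
grid-oscillation vector `o` (nonzero, `Dᵀ M o = 0`) of a nullspace consistent
SBP operator is the `M`-orthogonal projection onto the image of `D`:
`F F = F`, `M F` is symmetric, and `range F = range D`. -/
theorem filter_is_M_orthogonal_projection_onto_range_D
    {s : ℕ} (hs : 1 ≤ s)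
    (D M : Matrix (Fin s) (Fin s) ℝ)
    (hM : M.PosDef)
    (hker : LinearMap.ker (Matrix.toLin' D) = Submodule.span ℝ {(1 : Fin s → ℝ)})
    (o : Fin s → ℝ) (ho : o ≠ 0) (hoD : Dᵀ *ᵥ (M *ᵥ o) = 0)
    (F : Matrix (Fin s) (Fin s) ℝ)
    (hF : F = 1 - (o ⬝ᵥ (M *ᵥ o))⁻¹ • vecMulVec o (M *ᵥ o)) :
    F * F = F ∧ (M * F)ᵀ = M * F ∧
      LinearMap.range (Matrix.toLin' F) = LinearMap.range (Matrix.toLin' D) :=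
  filter_is_M_orthogonal_projection_onto_range_D_general D M hM hker o ho hoD F hF
end

section
/- Let D, M ∈ ℝ^{s×s} and t_L ∈ ℝ^s, where M is symmetric positive definite, t_Lᵀ·𝟙 = 1, the kernel of D equals the span of 𝟙, and o ∈ ℝ^s is nonzero with Dᵀ·M·o = 0. Define F = I − o·(M·o)ᵀ/(oᵀ·M·o). Then there exists a unique matrix X ∈ ℝ^{s×s} with D·X = F and t_Lᵀ·X = 0 (the row vector t_Lᵀ·X is zero); that is, the composition J·F of the discrete integral operator J with the projection F has a well-defined, unique matrix representation, and it satisfies D·(J·F) = F. -/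
/-!
Put `a = M o`. Positive definiteness gives `oᵀ a > 0`, so `a ≠ 0` and `aᵀ F = 0`. Since
`aᵀ D = 0`, the range of `D` lies in the hyperplane `a⊥`, and it has the same dimension `s - 1`
because `ker D` is the line spanned by `𝟙`; hence every column of `F` is in the range of `D` and
`D X₀ = F` is solvable. Subtracting `𝟙 (t_Lᵀ X₀)` enforces `t_Lᵀ X = 0`, and this normalised
solution is unique: if `D Z = 0` the columns of `Z` are multiples of `𝟙`, which `t_Lᵀ Z = 0`
forces to vanish.
-/

open Matrix

section
variable {K l m n : Type*} [Field K]

theorem Matrix.vecMul_one_sub_inv_smul_vecMulVec [Fintype n] [DecidableEq n] {o a : n → K}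
    (h : o ⬝ᵥ a ≠ 0) : a ᵥ* (1 - (o ⬝ᵥ a)⁻¹ • vecMulVec o a) = 0 := by
  rw [vecMul_sub, vecMul_one, vecMul_smul, vecMul_vecMulVec, dotProduct_comm a o, smul_smul,
    inv_mul_cancel₀ h, one_smul, sub_self]

theorem Matrix.range_toLin'_eq_ker_dotProductEquiv [Fintype n] [DecidableEq n]
    {D : Matrix n n K} {a : n → K} (ha : a ≠ 0) (haD : a ᵥ* D = 0)
    (hker : Module.finrank K (LinearMap.ker (toLin' D)) = 1) :
    LinearMap.range (toLin' D) = LinearMap.ker (dotProductEquiv K n a) := by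
  have hle : LinearMap.range (toLin' D) ≤ LinearMap.ker (dotProductEquiv K n a) := by
    rintro _ ⟨x, rfl⟩
    simp [dotProduct_mulVec, haD]
  refine Submodule.eq_of_le_of_finrank_eq hle ?_
  have hrank := LinearMap.finrank_range_add_finrank_ker (toLin' D)
  have hcorank := Module.Dual.finrank_ker_add_one_of_ne_zero
    ((dotProductEquiv K n).map_ne_zero_iff.mpr ha)
  omega

theorem Matrix.col_mul [Fintype m] (A : Matrix l m K) (B : Matrix m n K) (j : n) :
    (A * B).col j = A *ᵥ B.col j := rfl

theorem Matrix.exists_mul_eq_of_forall_col_mem_range [Fintype n] [DecidableEq n]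
    {D : Matrix m n K} {F : Matrix m l K}
    (h : ∀ j, F.col j ∈ LinearMap.range (toLin' D)) : ∃ X : Matrix n l K, D * X = F := by
  choose x hx using h
  exact ⟨(of x)ᵀ, ext_col fun j => hx j⟩

theorem Matrix.eq_zero_of_mul_eq_zero_of_vecMul_eq_zero [Fintype n] [DecidableEq n]
    {D : Matrix m n K} {Z : Matrix n l K} {u t : n → K}
    (hker : LinearMap.ker (toLin' D) = K ∙ u) (htu : t ⬝ᵥ u ≠ 0)
    (hDZ : D * Z = 0) (htZ : t ᵥ* Z = 0) : Z = 0 := by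
  refine ext_col fun j => ?_
  have hmem : Z.col j ∈ LinearMap.ker (toLin' D) := by
    rw [LinearMap.mem_ker, toLin'_apply, ← col_mul, hDZ]
    rfl
  obtain ⟨c, hc⟩ := Submodule.mem_span_singleton.mp (hker ▸ hmem)
  have hc0 : c * (t ⬝ᵥ u) = 0 := by
    simpa [← hc, vecMul_apply] using congrFun htZ j
  rw [← hc, (mul_eq_zero.mp hc0).resolve_right htu, zero_smul]
  rfl

theorem Matrix.existsUnique_mul_eq_and_vecMul_eq_zero [Fintype n] [DecidableEq n]
    {D : Matrix m n K} {F : Matrix m l K} {u t : n → K}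
    (hker : LinearMap.ker (toLin' D) = K ∙ u) (htu : t ⬝ᵥ u = 1)
    (hF : ∃ X : Matrix n l K, D * X = F) : ∃! X : Matrix n l K, D * X = F ∧ t ᵥ* X = 0 := by
  obtain ⟨X₀, hX₀⟩ := hF
  have hDu : D *ᵥ u = 0 := by
    simpa using hker.ge (Submodule.mem_span_singleton_self u)
  let X : Matrix n l K := X₀ - vecMulVec u (t ᵥ* X₀)
  have hDX : D * X = F := by
    rw [Matrix.mul_sub, mul_vecMulVec, hDu, zero_vecMulVec, sub_zero, hX₀]
  have htX : t ᵥ* X = 0 := by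
    rw [vecMul_sub, vecMul_vecMulVec, htu, one_smul, sub_self]
  refine ⟨X, ⟨hDX, htX⟩, fun Y ⟨hDY, htY⟩ => sub_eq_zero.mp ?_⟩
  exact eq_zero_of_mul_eq_zero_of_vecMul_eq_zero hker (htu ▸ one_ne_zero)
    (by rw [Matrix.mul_sub, hDY, hDX, sub_self]) (by rw [vecMul_sub, htY, htX, sub_self])

end

theorem JF_exists_unique_general
    {s : ℕ}
    (D M : Matrix (Fin s) (Fin s) ℝ) (tL : Fin s → ℝ)
    (hM : M.PosDef)
    (htL1 : tL ⬝ᵥ (1 : Fin s → ℝ) = 1)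
    (hker : LinearMap.ker (Matrix.toLin' D) = Submodule.span ℝ {(1 : Fin s → ℝ)})
    (o : Fin s → ℝ) (ho : o ≠ 0) (hoD : Dᵀ *ᵥ (M *ᵥ o) = 0)
    (F : Matrix (Fin s) (Fin s) ℝ)
    (hF : F = 1 - (o ⬝ᵥ (M *ᵥ o))⁻¹ • vecMulVec o (M *ᵥ o)) :
    ∃! X : Matrix (Fin s) (Fin s) ℝ, D * X = F ∧ tL ᵥ* X = 0 := by
  have hoMo : 0 < o ⬝ᵥ (M *ᵥ o) := by simpa using hM.dotProduct_mulVec_pos ho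
  have hMo : M *ᵥ o ≠ 0 := fun h => by simp [h] at hoMo
  have hone : (1 : Fin s → ℝ) ≠ 0 := fun h => by simp [h] at htL1
  have hrange := range_toLin'_eq_ker_dotProductEquiv hMo (by rwa [← mulVec_transpose])
    (by rw [hker, finrank_span_singleton hone])
  refine existsUnique_mul_eq_and_vecMul_eq_zero hker htL1
    (exists_mul_eq_of_forall_col_mem_range fun j => ?_)
  have hMoF : (M *ᵥ o) ᵥ* F = 0 := hF ▸ vecMul_one_sub_inv_smul_vecMulVec hoMo.ne'
  rw [hrange, LinearMap.mem_ker]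
  simpa [vecMul_apply] using congrFun hMoF j

/-- For a nullspace consistent SBP operator with `t_Lᵀ 𝟙 = 1`,
grid-oscillation vector `o` (nonzero, `Dᵀ M o = 0`) and filter
`F = I − o (M o)ᵀ / (oᵀ M o)`, there exists a unique matrix `X` with
`D X = F` and `t_Lᵀ X = 0`; i.e. the matrix representation `J F` of the
composition of the discrete integral operator with the projection is
well-defined and satisfies `D (J F) = F`. -/
theorem JF_exists_unique
    {s : ℕ} (hs : 1 ≤ s)
    (D M : Matrix (Fin s) (Fin s) ℝ) (tL : Fin s → ℝ)
    (hM : M.PosDef)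
    (htL1 : tL ⬝ᵥ (1 : Fin s → ℝ) = 1)
    (hker : LinearMap.ker (Matrix.toLin' D) = Submodule.span ℝ {(1 : Fin s → ℝ)})
    (o : Fin s → ℝ) (ho : o ≠ 0) (hoD : Dᵀ *ᵥ (M *ᵥ o) = 0)
    (F : Matrix (Fin s) (Fin s) ℝ)
    (hF : F = 1 - (o ⬝ᵥ (M *ᵥ o))⁻¹ • vecMulVec o (M *ᵥ o)) :
    ∃! X : Matrix (Fin s) (Fin s) ℝ, D * X = F ∧ tL ᵥ* X = 0 :=
  JF_exists_unique_general D M tL hM htL1 hker o ho hoD F hF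
end

section
/- Let D, M ∈ ℝ^{s×s} and t_L ∈ ℝ^s, where M is symmetric positive definite, t_Lᵀ·𝟙 = 1, and the kernel of D equals the span of 𝟙. Let o ∈ ℝ^s be nonzero with Dᵀ·M·o = 0, F = I − o·(M·o)ᵀ/(oᵀ·M·o), and X ∈ ℝ^{s×s} with D·X = F and t_Lᵀ·X = 0. Let p ≥ 1 and let τ ∈ ℝ^s satisfy D·τ^q = q·τ^{q−1} and t_Lᵀ·τ^q = 0 for all 1 ≤ q ≤ p (τ^q the componentwise power, τ^0 = 𝟙). Then q·(X·τ^{q−1}) = τ^q for all 1 ≤ q ≤ p; that is, the Runge–Kutta coefficient matrix A = J·F of the SBP projection scheme satisfies the simplifying assumption C(p). -/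
/-!
`F` fixes every vector in the range of `D`, since `Dᵀ (M o) = 0` makes `M o` orthogonal to that
range. Hence `D (X (D v)) = F (D v) = D v`, so `X (D v) - v` lies in `ker D = span 𝟙`; if moreover
`t_Lᵀ v = 0`, then `t_Lᵀ X = 0` and `t_Lᵀ 𝟙 = 1` force this multiple of `𝟙` to vanish. Applied to
`v = τ^q`, with `D τ^q = q τ^(q-1)`, this gives `q X τ^(q-1) = τ^q`.
-/

open Matrix

namespace Matrix

variable {n R : Type*} [Fintype n] [CommRing R]

theorem dotProduct_mulVec_eq_zero_of_transpose_mulVec_eq_zero {D : Matrix n n R} {m : n → R}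
    (hm : Dᵀ *ᵥ m = 0) (x : n → R) : m ⬝ᵥ (D *ᵥ x) = 0 := by
  rw [dotProduct_mulVec, ← mulVec_transpose, hm, zero_dotProduct]

theorem one_sub_smul_vecMulVec_mulVec_of_dotProduct_eq_zero [DecidableEq n] (c : R) (o : n → R) {m w : n → R}
    (hw : m ⬝ᵥ w = 0) : (1 - c • vecMulVec o m) *ᵥ w = w := by
  rw [sub_mulVec, one_mulVec, smul_mulVec, vecMulVec_mulVec, op_smul_eq_smul, hw, zero_smul,
    smul_zero, sub_zero]

theorem eq_zero_of_mulVec_eq_zero_of_dotProduct_eq_zero [DecidableEq n] {D : Matrix n n R} {tL u : n → R}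
    (hker : LinearMap.ker (toLin' D) = Submodule.span R {1}) (htL1 : tL ⬝ᵥ 1 = 1)
    (hDu : D *ᵥ u = 0) (htLu : tL ⬝ᵥ u = 0) : u = 0 := by
  have hmem : u ∈ Submodule.span R {(1 : n → R)} := by
    rw [← hker, LinearMap.mem_ker, toLin'_apply, hDu]
  obtain ⟨a, rfl⟩ := Submodule.mem_span_singleton.mp hmem
  rw [dotProduct_smul, htL1, smul_eq_mul, mul_one] at htLu
  rw [htLu, zero_smul]

theorem mulVec_mulVec_eq_self [DecidableEq n] {D X F : Matrix n n R} {tL v : n → R}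
    (hker : LinearMap.ker (toLin' D) = Submodule.span R {1}) (htL1 : tL ⬝ᵥ 1 = 1)
    (hX : D * X = F) (hXL : tL ᵥ* X = 0) (hF : F *ᵥ (D *ᵥ v) = D *ᵥ v) (htLv : tL ⬝ᵥ v = 0) :
    X *ᵥ (D *ᵥ v) = v := by
  rw [← sub_eq_zero]
  refine eq_zero_of_mulVec_eq_zero_of_dotProduct_eq_zero hker htL1 ?_ ?_
  · rw [mulVec_sub, mulVec_mulVec, hX, hF, sub_self]
  · rw [dotProduct_sub, dotProduct_mulVec, hXL, zero_dotProduct, htLv, sub_self]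

end Matrix

theorem sbp_projection_simplifying_C_general
    {s : ℕ}
    (D M : Matrix (Fin s) (Fin s) ℝ) (tL : Fin s → ℝ)
    (htL1 : tL ⬝ᵥ (1 : Fin s → ℝ) = 1)
    (hker : LinearMap.ker (Matrix.toLin' D) = Submodule.span ℝ {(1 : Fin s → ℝ)})
    (o : Fin s → ℝ) (hoD : Dᵀ *ᵥ (M *ᵥ o) = 0)
    (F : Matrix (Fin s) (Fin s) ℝ)
    (hF : F = 1 - (o ⬝ᵥ (M *ᵥ o))⁻¹ • vecMulVec o (M *ᵥ o))
    (X : Matrix (Fin s) (Fin s) ℝ)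
    (hX : D * X = F) (hXL : tL ᵥ* X = 0)
    (p : ℕ)
    (τ : Fin s → ℝ)
    (hacc : ∀ q : ℕ, 1 ≤ q → q ≤ p → D *ᵥ (τ ^ q) = (q : ℝ) • (τ ^ (q - 1)))
    (hτL : ∀ q : ℕ, 1 ≤ q → q ≤ p → tL ⬝ᵥ (τ ^ q) = 0) :
    ∀ q : ℕ, 1 ≤ q → q ≤ p → (q : ℝ) • (X *ᵥ (τ ^ (q - 1))) = τ ^ q := by
  intro q hq hqp
  have hFD : F *ᵥ (D *ᵥ τ ^ q) = D *ᵥ τ ^ q := by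
    rw [hF]
    exact one_sub_smul_vecMulVec_mulVec_of_dotProduct_eq_zero _ o
      (dotProduct_mulVec_eq_zero_of_transpose_mulVec_eq_zero hoD _)
  rw [← mulVec_smul, ← hacc q hq hqp]
  exact mulVec_mulVec_eq_self hker htL1 hX hXL hFD (hτL q hq hqp)

/-- Simplifying assumption `C(p)` for the SBP projection scheme.
For a nullspace consistent SBP operator with filter `F` and matrix
representation `X` of `J F` (`D X = F`, `t_Lᵀ X = 0`), if the node monomials
satisfy `D τ^q = q τ^(q−1)` and `t_Lᵀ τ^q = 0` for `1 ≤ q ≤ p`, then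
`q (X τ^(q−1)) = τ^q` for all `1 ≤ q ≤ p`. -/
theorem sbp_projection_simplifying_C
    {s : ℕ} (hs : 1 ≤ s)
    (D M : Matrix (Fin s) (Fin s) ℝ) (tL : Fin s → ℝ)
    (hM : M.PosDef)
    (htL1 : tL ⬝ᵥ (1 : Fin s → ℝ) = 1)
    (hker : LinearMap.ker (Matrix.toLin' D) = Submodule.span ℝ {(1 : Fin s → ℝ)})
    (o : Fin s → ℝ) (ho : o ≠ 0) (hoD : Dᵀ *ᵥ (M *ᵥ o) = 0)
    (F : Matrix (Fin s) (Fin s) ℝ)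
    (hF : F = 1 - (o ⬝ᵥ (M *ᵥ o))⁻¹ • vecMulVec o (M *ᵥ o))
    (X : Matrix (Fin s) (Fin s) ℝ)
    (hX : D * X = F) (hXL : tL ᵥ* X = 0)
    (p : ℕ) (hp : 1 ≤ p)
    (τ : Fin s → ℝ)
    (hacc : ∀ q : ℕ, 1 ≤ q → q ≤ p → D *ᵥ (τ ^ q) = (q : ℝ) • (τ ^ (q - 1)))
    (hτL : ∀ q : ℕ, 1 ≤ q → q ≤ p → tL ⬝ᵥ (τ ^ q) = 0) :
    ∀ q : ℕ, 1 ≤ q → q ≤ p → (q : ℝ) • (X *ᵥ (τ ^ (q - 1))) = τ ^ q :=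
  sbp_projection_simplifying_C_general D M tL htL1 hker o hoD F hF X hX hXL p τ hacc hτL
end

section
/- Let D, M ∈ ℝ^{s×s} and t_L, t_R ∈ ℝ^s, where M is symmetric positive definite, M·D + (M·D)ᵀ = t_R·t_Rᵀ − t_L·t_Lᵀ, t_Lᵀ·𝟙 = 1, and the kernel of D equals the span of 𝟙. Let o ∈ ℝ^s be nonzero with Dᵀ·M·o = 0, F = I − o·(M·o)ᵀ/(oᵀ·M·o), and X ∈ ℝ^{s×s} with D·X = F and t_Lᵀ·X = 0. Let p ≥ 1 and let τ ∈ ℝ^s satisfy D·τ^q = q·τ^{q−1} for all 1 ≤ q ≤ p, and t_Lᵀ·τ^q = 0 and t_Rᵀ·τ^q = 1 for all 1 ≤ q ≤ p−1 (τ^q the componentwise power, τ^0 = 𝟙). Then q·(Xᵀ·M·τ^{q−1}) = M·(𝟙 − τ^q) for all 1 ≤ q ≤ p−1; that is, the Runge–Kutta coefficients of the SBP projection scheme satisfy the simplifying assumption D(p−1). -/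
open Matrix

/-!
Multiplying the SBP property `M D = t_R t_Rᵀ - t_L t_Lᵀ - Dᵀ M` by `Xᵀ` and using `D X = F`,
`t_Lᵀ X = 0` gives `Xᵀ M D v = (t_Rᵀ v) Xᵀ t_R - Fᵀ M v`. The projection `Fᵀ` fixes `M v` for
every `v` in the range of `D`, in particular for `v = τ^r` with `r < p`, because
`D τ^(r+1) = (r+1) τ^r`. For `v = 𝟙` this yields `Xᵀ t_R = M 𝟙`; here `t_Rᵀ 𝟙 = 1` because the
SBP property forces `(t_Rᵀ 𝟙)² = 1` and `t_Rᵀ 𝟙 = 𝟙ᵀ M 𝟙 > 0`. Then `v = τ^q` gives the claim.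
-/

section SBP

variable {n R : Type*} [Fintype n] [CommRing R]

theorem dotProduct_mulVec_add_dotProduct_mulVec_of_add_transpose_eq {A : Matrix n n R}
    {a b : n → R} (hA : A + Aᵀ = vecMulVec a a - vecMulVec b b) (u v : n → R) :
    u ⬝ᵥ (A *ᵥ v) + v ⬝ᵥ (A *ᵥ u) = (a ⬝ᵥ u) * (a ⬝ᵥ v) - (b ⬝ᵥ u) * (b ⬝ᵥ v) := by
  have h := congrArg (fun B => u ⬝ᵥ (B *ᵥ v)) hA
  simp only [add_mulVec, sub_mulVec, vecMulVec_mulVec, op_smul_eq_smul, dotProduct_add,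
    dotProduct_sub, dotProduct_smul, smul_eq_mul] at h
  rw [dotProduct_mulVec u Aᵀ, vecMul_transpose, dotProduct_comm (A *ᵥ u)] at h
  rw [h, dotProduct_comm u a, dotProduct_comm u b]
  ring

theorem mul_mulVec_vecMul_of_sbp {M D X F : Matrix n n R} {tL tR : n → R}
    (hSBP : M * D + (M * D)ᵀ = vecMulVec tR tR - vecMulVec tL tL) (hX : D * X = F)
    (hXL : tL ᵥ* X = 0) (v : n → R) :
    ((M * D) *ᵥ v) ᵥ* X = (tR ⬝ᵥ v) • (tR ᵥ* X) - v ᵥ* M ᵥ* F := by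
  have hMD : (M * D) *ᵥ v = (tR ⬝ᵥ v) • tR - (tL ⬝ᵥ v) • tL - v ᵥ* (M * D) := by
    rw [congrArg (· *ᵥ v) (eq_sub_of_add_eq hSBP), sub_mulVec, sub_mulVec, mulVec_transpose]
    simp only [vecMulVec_mulVec, op_smul_eq_smul]
  rw [hMD, sub_vecMul, sub_vecMul, smul_vecMul, smul_vecMul, hXL, smul_zero, sub_zero,
    vecMul_vecMul, vecMul_vecMul, Matrix.mul_assoc, hX]

variable [DecidableEq n]

theorem vecMul_one_sub_smul_vecMulVec_of_dotProduct_eq_zero {u o : n → R} (c : R)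
    (w : n → R) (h : u ⬝ᵥ o = 0) : u ᵥ* (1 - c • vecMulVec o w) = u := by
  rw [vecMul_sub, vecMul_one, vecMul_smul, vecMul_vecMulVec, h, zero_smul, smul_zero, sub_zero]

theorem vecMul_one_sub_smul_vecMulVec_of_transpose_mulVec_eq_zero {D M : Matrix n n R}
    {o : n → R} (hoD : Dᵀ *ᵥ (M *ᵥ o) = 0) (c : R) (y : n → R) :
    (D *ᵥ y) ᵥ* M ᵥ* (1 - c • vecMulVec o (M *ᵥ o)) = (D *ᵥ y) ᵥ* M := by
  refine vecMul_one_sub_smul_vecMulVec_of_dotProduct_eq_zero c _ ?_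
  rw [← dotProduct_mulVec, dotProduct_comm, dotProduct_mulVec, ← mulVec_transpose, hoD,
    zero_dotProduct]

end SBP

theorem dotProduct_one_eq_one_of_sbp {n K : Type*} [Fintype n] [Field K] [LinearOrder K]
    [IsStrictOrderedRing K] {M D : Matrix n n K} {tL tR τ : n → K}
    (hSBP : M * D + (M * D)ᵀ = vecMulVec tR tR - vecMulVec tL tL)
    (hM : 0 < 1 ⬝ᵥ (M *ᵥ 1)) (hD1 : D *ᵥ 1 = 0) (hDτ : D *ᵥ τ = 1)
    (htL1 : tL ⬝ᵥ 1 = 1) (hτL : tL ⬝ᵥ τ = 0) (hτR : tR ⬝ᵥ τ = 1) :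
    tR ⬝ᵥ 1 = 1 := by
  have hMD1 : (M * D) *ᵥ 1 = 0 := by rw [← mulVec_mulVec, hD1, mulVec_zero]
  have hsq := dotProduct_mulVec_add_dotProduct_mulVec_of_add_transpose_eq hSBP 1 1
  have hmass := dotProduct_mulVec_add_dotProduct_mulVec_of_add_transpose_eq hSBP 1 τ
  rw [hMD1, dotProduct_zero, htL1] at hsq
  rw [← mulVec_mulVec, hDτ, hMD1, dotProduct_zero, htL1, hτL, hτR] at hmass
  nlinarith

theorem sbp_projection_simplifying_D_general
    {s : ℕ}
    (D M : Matrix (Fin s) (Fin s) ℝ) (tL tR : Fin s → ℝ)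
    (hM : M.PosDef)
    (hSBP : M * D + (M * D)ᵀ = vecMulVec tR tR - vecMulVec tL tL)
    (htL1 : tL ⬝ᵥ (1 : Fin s → ℝ) = 1)
    (hker : LinearMap.ker (Matrix.toLin' D) = Submodule.span ℝ {(1 : Fin s → ℝ)})
    (o : Fin s → ℝ) (hoD : Dᵀ *ᵥ (M *ᵥ o) = 0)
    (F : Matrix (Fin s) (Fin s) ℝ)
    (hF : F = 1 - (o ⬝ᵥ (M *ᵥ o))⁻¹ • vecMulVec o (M *ᵥ o))
    (X : Matrix (Fin s) (Fin s) ℝ)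
    (hX : D * X = F) (hXL : tL ᵥ* X = 0)
    (p : ℕ)
    (τ : Fin s → ℝ)
    (hacc : ∀ q : ℕ, 1 ≤ q → q ≤ p → D *ᵥ (τ ^ q) = (q : ℝ) • (τ ^ (q - 1)))
    (hτL : ∀ q : ℕ, 1 ≤ q → q ≤ p - 1 → tL ⬝ᵥ (τ ^ q) = 0)
    (hτR : ∀ q : ℕ, 1 ≤ q → q ≤ p - 1 → tR ⬝ᵥ (τ ^ q) = 1) :
    ∀ q : ℕ, 1 ≤ q → q ≤ p - 1 →
      (q : ℝ) • (Xᵀ *ᵥ (M *ᵥ (τ ^ (q - 1)))) = M *ᵥ ((1 : Fin s → ℝ) - τ ^ q) := by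
  intro q hq hqp
  have hMv (v : Fin s → ℝ) : v ᵥ* M = M *ᵥ v := by
    rw [← mulVec_transpose, ← conjTranspose_eq_transpose_of_trivial, hM.isHermitian.eq]
  have hD1 : D *ᵥ 1 = 0 := by
    have h : (1 : Fin s → ℝ) ∈ LinearMap.ker (toLin' D) :=
      hker ▸ Submodule.mem_span_singleton_self _
    simpa [toLin'_apply] using h
  have hone : (1 : Fin s → ℝ) ≠ 0 := fun h => by simp [h] at htL1
  have htR1 : tR ⬝ᵥ 1 = 1 :=
    dotProduct_one_eq_one_of_sbp hSBP (hM.dotProduct_mulVec_pos hone) hD1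
      (by simpa using hacc 1 le_rfl (by omega)) htL1 (by simpa using hτL 1 le_rfl (by omega))
      (by simpa using hτR 1 le_rfl (by omega))
  have hfix (r : ℕ) (hr : r + 1 ≤ p) : (M *ᵥ τ ^ r) ᵥ* F = M *ᵥ τ ^ r := by
    have hτr : τ ^ r = D *ᵥ (((r + 1 : ℕ) : ℝ)⁻¹ • τ ^ (r + 1)) := by
      rw [mulVec_smul, hacc (r + 1) (by omega) hr, smul_smul, inv_mul_cancel₀ (by positivity),
        one_smul, Nat.add_sub_cancel]
    rw [← hMv, hF, hτr]
    exact vecMul_one_sub_smul_vecMulVec_of_transpose_mulVec_eq_zero hoD _ _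
  have hXtR : tR ᵥ* X = M *ᵥ 1 := by
    have h := mul_mulVec_vecMul_of_sbp hSBP hX hXL 1
    have hfix0 := hfix 0 (by omega)
    rw [pow_zero] at hfix0
    rw [← mulVec_mulVec, hD1, mulVec_zero, zero_vecMul, htR1, one_smul, hMv, hfix0, eq_comm,
      sub_eq_zero] at h
    exact h
  have h := mul_mulVec_vecMul_of_sbp hSBP hX hXL (τ ^ q)
  rw [← mulVec_mulVec, hacc q hq (by omega), mulVec_smul, smul_vecMul, hτR q hq hqp, one_smul,
    hXtR, hMv, hfix q (by omega)] at h
  rw [mulVec_transpose, h, mulVec_sub]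

/-- Simplifying assumption `D(p−1)` for the SBP projection
scheme. With the SBP property, nullspace consistency, `t_Lᵀ 𝟙 = 1`, filter `F`
and matrix representation `X` of `J F`, if `D τ^q = q τ^(q−1)` for `1 ≤ q ≤ p`
and `t_Lᵀ τ^q = 0`, `t_Rᵀ τ^q = 1` for `1 ≤ q ≤ p−1`, then
`q (Xᵀ M τ^(q−1)) = M (𝟙 − τ^q)` for all `1 ≤ q ≤ p−1`. -/
theorem sbp_projection_simplifying_D
    {s : ℕ} (hs : 1 ≤ s)
    (D M : Matrix (Fin s) (Fin s) ℝ) (tL tR : Fin s → ℝ)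
    (hM : M.PosDef)
    (hSBP : M * D + (M * D)ᵀ = vecMulVec tR tR - vecMulVec tL tL)
    (htL1 : tL ⬝ᵥ (1 : Fin s → ℝ) = 1)
    (hker : LinearMap.ker (Matrix.toLin' D) = Submodule.span ℝ {(1 : Fin s → ℝ)})
    (o : Fin s → ℝ) (ho : o ≠ 0) (hoD : Dᵀ *ᵥ (M *ᵥ o) = 0)
    (F : Matrix (Fin s) (Fin s) ℝ)
    (hF : F = 1 - (o ⬝ᵥ (M *ᵥ o))⁻¹ • vecMulVec o (M *ᵥ o))
    (X : Matrix (Fin s) (Fin s) ℝ)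
    (hX : D * X = F) (hXL : tL ᵥ* X = 0)
    (p : ℕ) (hp : 1 ≤ p)
    (τ : Fin s → ℝ)
    (hacc : ∀ q : ℕ, 1 ≤ q → q ≤ p → D *ᵥ (τ ^ q) = (q : ℝ) • (τ ^ (q - 1)))
    (hτL : ∀ q : ℕ, 1 ≤ q → q ≤ p - 1 → tL ⬝ᵥ (τ ^ q) = 0)
    (hτR : ∀ q : ℕ, 1 ≤ q → q ≤ p - 1 → tR ⬝ᵥ (τ ^ q) = 1) :
    ∀ q : ℕ, 1 ≤ q → q ≤ p - 1 →
      (q : ℝ) • (Xᵀ *ᵥ (M *ᵥ (τ ^ (q - 1)))) = M *ᵥ ((1 : Fin s → ℝ) - τ ^ q) :=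
  sbp_projection_simplifying_D_general D M tL tR hM hSBP htL1 hker o hoD F hF X hX hXL p τ hacc hτL
    hτR
end

section
/- Let D, M ∈ ℝ^{s×s} and t_L, t_R ∈ ℝ^s, where M is symmetric positive definite, M·D + (M·D)ᵀ = t_R·t_Rᵀ − t_L·t_Lᵀ, t_Rᵀ·𝟙 = 1, and the kernel of D equals the span of 𝟙. Let o ∈ ℝ^s be nonzero with Dᵀ·M·o = 0, F = I − o·(M·o)ᵀ/(oᵀ·M·o), and let X̃ ∈ ℝ^{s×s} satisfy D·X̃ = −F and t_Rᵀ·X̃ = 0 (the matrix representation of the backward integral operator J̃·F, where J̃ inverts −D on grid functions vanishing at the right endpoint). Let p ≥ 1 and let τ ∈ ℝ^s satisfy D·τ^q = q·τ^{q−1} for all 1 ≤ q ≤ p and t_Lᵀ·τ^q = 0 for all 1 ≤ q ≤ p−1 (τ^q the componentwise power, τ^0 = 𝟙). Then q·(X̃ᵀ·M·τ^{q−1}) = M·τ^q for all 1 ≤ q ≤ p−1; that is, the Runge–Kutta coefficients A = M⁻¹·(J̃·F)ᵀ·M of the adjoint (Lobatto IIIB-type) SBP scheme satisfy the simplifying assumption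 C(p−1). -/
/-!
Write `w = τ^q`. Accuracy gives `q τ^(q-1) = D w`, and the SBP property turns `M D w` into
`(t_Rᵀ w) t_R - (t_Lᵀ w) t_L - Dᵀ M w`. Applying `X̃ᵀ`, the boundary terms vanish because
`t_Rᵀ X̃ = 0` and `t_Lᵀ w = 0`, while `-X̃ᵀ Dᵀ = Fᵀ`. Finally `Fᵀ` fixes `M w`: the oscillation
`M o` annihilates the range of `D`, which contains `w = D τ^(q+1) / (q+1)`.
-/

open Matrix

variable {n R : Type*} [Fintype n] [CommRing R]

theorem Matrix.dotProduct_mulVec_eq_zero_of_transpose_mulVec_eq_zero_s16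
    {D : Matrix n n R} {u : n → R} (hu : Dᵀ *ᵥ u = 0) (v : n → R) :
    u ⬝ᵥ (D *ᵥ v) = 0 := by
  rw [dotProduct_mulVec, ← mulVec_transpose, hu, zero_dotProduct]

theorem Matrix.mulVec_mulVec_eq_of_sbp {D M : Matrix n n R} {tL tR w : n → R}
    (hMsymm : Mᵀ = M) (hSBP : M * D + (M * D)ᵀ = vecMulVec tR tR - vecMulVec tL tL)
    (hw : tL ⬝ᵥ w = 0) :
    M *ᵥ (D *ᵥ w) = (tR ⬝ᵥ w) • tR - Dᵀ *ᵥ (M *ᵥ w) := by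
  have hMD : M * D = vecMulVec tR tR - vecMulVec tL tL - Dᵀ * M := by
    rw [← hSBP, transpose_mul, hMsymm, add_sub_cancel_right]
  rw [mulVec_mulVec, hMD, sub_mulVec, sub_mulVec, vecMulVec_mulVec, vecMulVec_mulVec, hw,
    op_smul_eq_smul, op_smul_eq_smul, zero_smul, sub_zero, mulVec_mulVec]

theorem Matrix.transpose_one_sub_smul_vecMulVec_mulVec [DecidableEq n] (c : R)
    {o v u : n → R} (hu : o ⬝ᵥ u = 0) :
    (1 - c • vecMulVec o v)ᵀ *ᵥ u = u := by
  rw [transpose_sub, transpose_one, transpose_smul, transpose_vecMulVec, sub_mulVec,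
    one_mulVec, smul_mulVec, vecMulVec_mulVec, hu, op_smul_eq_smul, zero_smul, smul_zero,
    sub_zero]

theorem sbp_adjoint_projection_simplifying_C_general
    {s : ℕ}
    (D M : Matrix (Fin s) (Fin s) ℝ) (tL tR : Fin s → ℝ)
    (hM : M.PosDef)
    (hSBP : M * D + (M * D)ᵀ = vecMulVec tR tR - vecMulVec tL tL)
    (o : Fin s → ℝ) (hoD : Dᵀ *ᵥ (M *ᵥ o) = 0)
    (F : Matrix (Fin s) (Fin s) ℝ)
    (hF : F = 1 - (o ⬝ᵥ (M *ᵥ o))⁻¹ • vecMulVec o (M *ᵥ o))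
    (X' : Matrix (Fin s) (Fin s) ℝ)
    (hX' : D * X' = -F) (hXR : tR ᵥ* X' = 0)
    (p : ℕ)
    (τ : Fin s → ℝ)
    (hacc : ∀ q : ℕ, 1 ≤ q → q ≤ p → D *ᵥ (τ ^ q) = (q : ℝ) • (τ ^ (q - 1)))
    (hτL : ∀ q : ℕ, 1 ≤ q → q ≤ p - 1 → tL ⬝ᵥ (τ ^ q) = 0) :
    ∀ q : ℕ, 1 ≤ q → q ≤ p - 1 →
      (q : ℝ) • (X'ᵀ *ᵥ (M *ᵥ (τ ^ (q - 1)))) = M *ᵥ (τ ^ q) := by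
  intro q hq1 hqp
  have hMsymm : Mᵀ = M := hM.1.eq
  have hoτ : o ⬝ᵥ (M *ᵥ τ ^ q) = 0 := by
    have h := dotProduct_mulVec_eq_zero_of_transpose_mulVec_eq_zero_s16 hoD (τ ^ (q + 1))
    rw [hacc (q + 1) (by omega) (by omega), Nat.add_sub_cancel, dotProduct_smul,
      smul_eq_mul, mul_eq_zero] at h
    rw [dotProduct_mulVec, ← mulVec_transpose, hMsymm]
    exact h.resolve_left (by positivity)
  calc (q : ℝ) • (X'ᵀ *ᵥ (M *ᵥ τ ^ (q - 1)))
      = X'ᵀ *ᵥ (M *ᵥ (D *ᵥ τ ^ q)) := by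
        rw [hacc q hq1 (by omega), mulVec_smul, mulVec_smul]
    _ = -((D * X')ᵀ *ᵥ (M *ᵥ τ ^ q)) := by
        rw [mulVec_mulVec_eq_of_sbp hMsymm hSBP (hτL q hq1 hqp), mulVec_sub, mulVec_smul,
          mulVec_transpose, hXR, smul_zero, zero_sub, mulVec_mulVec, transpose_mul]
    _ = M *ᵥ τ ^ q := by
        rw [hX', transpose_neg, neg_mulVec, neg_neg, hF,
          transpose_one_sub_smul_vecMulVec_mulVec _ hoτ]

/-- Simplifying assumption `C(p−1)` for the adjoint
(Lobatto IIIB-type) SBP scheme. With the SBP property, nullspace consistency,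
`t_Rᵀ 𝟙 = 1`, filter `F`, and matrix representation `X̃` of the backward
integral operator `J̃ F` (`D X̃ = −F`, `t_Rᵀ X̃ = 0`), if `D τ^q = q τ^(q−1)`
for `1 ≤ q ≤ p` and `t_Lᵀ τ^q = 0` for `1 ≤ q ≤ p−1`, then
`q (X̃ᵀ M τ^(q−1)) = M τ^q` for all `1 ≤ q ≤ p−1`. -/
theorem sbp_adjoint_projection_simplifying_C
    {s : ℕ} (hs : 1 ≤ s)
    (D M : Matrix (Fin s) (Fin s) ℝ) (tL tR : Fin s → ℝ)
    (hM : M.PosDef)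
    (hSBP : M * D + (M * D)ᵀ = vecMulVec tR tR - vecMulVec tL tL)
    (htR1 : tR ⬝ᵥ (1 : Fin s → ℝ) = 1)
    (hker : LinearMap.ker (Matrix.toLin' D) = Submodule.span ℝ {(1 : Fin s → ℝ)})
    (o : Fin s → ℝ) (ho : o ≠ 0) (hoD : Dᵀ *ᵥ (M *ᵥ o) = 0)
    (F : Matrix (Fin s) (Fin s) ℝ)
    (hF : F = 1 - (o ⬝ᵥ (M *ᵥ o))⁻¹ • vecMulVec o (M *ᵥ o))
    (X' : Matrix (Fin s) (Fin s) ℝ)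
    (hX' : D * X' = -F) (hXR : tR ᵥ* X' = 0)
    (p : ℕ) (hp : 1 ≤ p)
    (τ : Fin s → ℝ)
    (hacc : ∀ q : ℕ, 1 ≤ q → q ≤ p → D *ᵥ (τ ^ q) = (q : ℝ) • (τ ^ (q - 1)))
    (hτL : ∀ q : ℕ, 1 ≤ q → q ≤ p - 1 → tL ⬝ᵥ (τ ^ q) = 0) :
    ∀ q : ℕ, 1 ≤ q → q ≤ p - 1 →
      (q : ℝ) • (X'ᵀ *ᵥ (M *ᵥ (τ ^ (q - 1)))) = M *ᵥ (τ ^ q) :=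
  sbp_adjoint_projection_simplifying_C_general D M tL tR hM hSBP o hoD F hF X' hX' hXR p τ hacc hτL
end
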